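/- arXiv:1202.0844 — 3 statements merged into one kernel-verified Lean document; each statement's English description precedes it below -/
import Mathlib

section
/- Let Γ be a countable LITFA group. Then the integral group ring ℤ[Γ] has no zero divisors: for all a, b ∈ ℤ[Γ], if a·b = 0 then a = 0 or b = 0. (This is the domain part of Theorem 2.4(1)-(2) of the paper: every non-zero element of ℤ[Γ] is a non-zero divisor.) -/
/-- The space of bounded real-valued functions on `Γ`, as a submodule of `Γ → ℝ`. -/
def BoundedFun (Γ : Type*) : Submodule ℝ (Γ → ℝ) where
  carrier := {f | ∃ C : ℝ, ∀ x, |f x| ≤ C}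
  add_mem' := by
    rintro f g ⟨C, hC⟩ ⟨D, hD⟩
    exact ⟨C + D, fun x => (abs_add_le _ _).trans (add_le_add (hC x) (hD x))⟩
  zero_mem' := ⟨0, fun x => by simp⟩
  smul_mem' := by
    rintro c f ⟨C, hC⟩
    exact ⟨|c| * C, fun x => by
      simpa [abs_mul] using mul_le_mul_of_nonneg_left (hC x) (abs_nonneg c)⟩

/-- `m` is a left-invariant mean on the group `Γ`: an `ℝ`-linear functional on the space of
bounded functions `Γ → ℝ` which is nonnegative on nonnegative functions, sends the constant
function `1` to `1`, and is invariant under left translation. -/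
def IsInvariantMean (Γ : Type*) [Group Γ] (m : BoundedFun Γ →ₗ[ℝ] ℝ) : Prop :=
  (∀ f : BoundedFun Γ, (∀ x, 0 ≤ (f : Γ → ℝ) x) → 0 ≤ m f) ∧
  (m ⟨fun _ => (1 : ℝ), ⟨1, fun x => by norm_num⟩⟩ = 1) ∧
  (∀ (g : Γ) (f : BoundedFun Γ),
    m ⟨fun x => (f : Γ → ℝ) (g⁻¹ * x), by
      obtain ⟨C, hC⟩ := f.2
      exact ⟨C, fun x => hC _⟩⟩ = m f)

/-- A group is amenable if it admits a left-invariant mean. -/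
def IsAmenable (Γ : Type*) [Group Γ] : Prop :=
  ∃ m : BoundedFun Γ →ₗ[ℝ] ℝ, IsInvariantMean Γ m

/-!
A locally indicable group has unique products, and a group ring over a domain of a group with
unique products has no zero divisors (the leading-term argument, available in Mathlib as an
instance). For unique products, induct on `#A + #B`. Translate so that `1 ∈ A` and `1 ∈ B`; the
subgroup generated by `A ∪ B` then has a nontrivial homomorphism `φ` to `ℤ`. A unique product of
`φ '' A` and `φ '' B` in `ℤ` lifts to any unique product of the two fibres over it, and these
fibres are strictly smaller than `A`, `B`: otherwise `φ` would be constant on `A` and on `B`,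
hence trivial on `A ∪ B` (as `φ 1 = 1`), hence trivial.
-/

open Finset

namespace UniqueMul

theorem exists_map_iff {G H : Type*} [Mul G] [Mul H] (f : H ↪ G)
    (mul : ∀ x y, f (x * y) = f x * f y) {A B : Finset H} :
    (∃ x ∈ A.map f, ∃ y ∈ B.map f, UniqueMul (A.map f) (B.map f) x y) ↔
      ∃ x ∈ A, ∃ y ∈ B, UniqueMul A B x y := by
  simp only [mem_map, exists_exists_and_eq_and, mulHom_map_iff f mul]

variable {G : Type*} [Group G]

theorem of_map_translate {A B : Finset G} {a b x y : G}
    (h : UniqueMul (A.map (mulLeftEmbedding a⁻¹)) (B.map (mulRightEmbedding b⁻¹)) x y) :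
    UniqueMul A B (a * x) (y * b) := by
  intro a' b' ha' hb' hab
  have hxy : (a⁻¹ * a') * (b' * b⁻¹) = x * y := by
    calc (a⁻¹ * a') * (b' * b⁻¹) = a⁻¹ * (a' * b') * b⁻¹ := by group
      _ = x * y := by rw [hab]; group
  obtain ⟨hx, hy⟩ := h (mem_map_of_mem _ ha') (mem_map_of_mem _ hb') hxy
  rw [mulLeftEmbedding_apply] at hx
  rw [mulRightEmbedding_apply] at hy
  constructor
  · rw [← hx]; group
  · rw [← hy]; group

theorem exists_of_exists_map_translate {A B : Finset G} (a b : G)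
    (h : ∃ x ∈ A.map (mulLeftEmbedding a⁻¹), ∃ y ∈ B.map (mulRightEmbedding b⁻¹),
      UniqueMul (A.map (mulLeftEmbedding a⁻¹)) (B.map (mulRightEmbedding b⁻¹)) x y) :
    ∃ x ∈ A, ∃ y ∈ B, UniqueMul A B x y := by
  obtain ⟨x, hx, y, hy, hxy⟩ := h
  refine ⟨a * x, ?_, y * b, ?_, of_map_translate hxy⟩
  · obtain ⟨a', ha', rfl⟩ := mem_map.1 hx
    simpa using ha'
  · obtain ⟨b', hb', rfl⟩ := mem_map.1 hy
    simpa using hb'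

variable {K : Type*} [Monoid K]

theorem card_filter_add_card_filter_lt [DecidableEq K] {φ : G →* K} (hφ : φ ≠ 1)
    {A B : Finset G} (hA : 1 ∈ A) (hB : 1 ∈ B) (hAB : Subgroup.closure ((A : Set G) ∪ B) = ⊤)
    (k l : K) : #{a ∈ A | φ a = k} + #{b ∈ B | φ b = l} < #A + #B := by
  by_contra! hle
  have hAk : ∀ a ∈ A, φ a = k := card_filter_eq_iff.1 <| by
    have := card_filter_le A (φ · = k); have := card_filter_le B (φ · = l); omega
  have hBl : ∀ b ∈ B, φ b = l := card_filter_eq_iff.1 <| by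
    have := card_filter_le A (φ · = k); have := card_filter_le B (φ · = l); omega
  have hk : k = 1 := (hAk 1 hA).symm.trans φ.map_one
  have hl : l = 1 := (hBl 1 hB).symm.trans φ.map_one
  refine hφ (MonoidHom.eq_of_eqOn_dense hAB ?_)
  rintro x (hx | hx)
  · simp [hAk x hx, hk]
  · simp [hBl x hx, hl]

theorem exists_of_monoidHom_ne_one [UniqueProds K] {φ : G →* K} (hφ : φ ≠ 1)
    {A B : Finset G} (hA : 1 ∈ A) (hB : 1 ∈ B) (hAB : Subgroup.closure ((A : Set G) ∪ B) = ⊤)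
    (ih : ∀ A' B' : Finset G, #A' + #B' < #A + #B → A'.Nonempty → B'.Nonempty →
      ∃ x ∈ A', ∃ y ∈ B', UniqueMul A' B' x y) :
    ∃ x ∈ A, ∃ y ∈ B, UniqueMul A B x y := by
  classical
  obtain ⟨k, hk, l, hl, hu⟩ :=
    UniqueProds.uniqueMul_of_nonempty (Nonempty.image ⟨1, hA⟩ φ) (Nonempty.image ⟨1, hB⟩ φ)
  rw [mem_image, ← filter_nonempty_iff] at hk hl
  obtain ⟨x, hx, y, hy, hxy⟩ :=
    ih _ _ (card_filter_add_card_filter_lt hφ hA hB hAB k l) hk hl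
  rw [mem_filter] at hx hy
  exact ⟨x, hx.1, y, hy.1, of_image_filter φ.toMulHom hx.2 hy.2 hu hxy⟩

theorem exists_of_closure_monoidHom_ne_one [UniqueProds K] {A B : Finset G} (hA : 1 ∈ A)
    (hB : 1 ∈ B) {φ : Subgroup.closure ((A : Set G) ∪ B) →* K} (hφ : φ ≠ 1)
    (ih : ∀ A' B' : Finset G, #A' + #B' < #A + #B → A'.Nonempty → B'.Nonempty →
      ∃ x ∈ A', ∃ y ∈ B', UniqueMul A' B' x y) :
    ∃ x ∈ A, ∃ y ∈ B, UniqueMul A B x y := by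
  classical
  set H := Subgroup.closure ((A : Set G) ∪ B)
  let ι : H ↪ G := Function.Embedding.subtype _
  have hmapA : (A.subtype (· ∈ H)).map ι = A :=
    subtype_map_of_mem fun x hx ↦ Subgroup.subset_closure (Or.inl hx)
  have hmapB : (B.subtype (· ∈ H)).map ι = B :=
    subtype_map_of_mem fun x hx ↦ Subgroup.subset_closure (Or.inr hx)
  have hcard : #(A.subtype (· ∈ H)) + #(B.subtype (· ∈ H)) = #A + #B := by
    rw [← card_map ι, ← card_map ι, hmapA, hmapB]
  rw [← hmapA, ← hmapB, exists_map_iff ι fun _ _ ↦ rfl]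
  refine exists_of_monoidHom_ne_one hφ (by simpa using hA) (by simpa using hB) ?_ ?_
  · convert Subgroup.closure_closure_coe_preimage using 2
    ext x
    simp
  · intro A' B' hlt hA' hB'
    rw [← exists_map_iff ι fun _ _ ↦ rfl]
    exact ih _ _ (by rwa [card_map, card_map, ← hcard]) hA'.map hB'.map

end UniqueMul

theorem UniqueProds.of_forall_fg_exists_monoidHom_ne_one {G K : Type*} [Group G] [Monoid K]
    [UniqueProds K] (h : ∀ H : Subgroup G, H ≠ ⊥ → H.FG → ∃ φ : H →* K, φ ≠ 1) :
    UniqueProds G where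
  uniqueMul_of_nonempty {A B} hA hB := by
    classical
    induction hn : #A + #B using Nat.strong_induction_on generalizing A B with
    | _ n ih =>
    obtain ⟨a, ha⟩ := hA
    obtain ⟨b, hb⟩ := hB
    apply UniqueMul.exists_of_exists_map_translate a b
    set A₁ := A.map (mulLeftEmbedding a⁻¹)
    set B₁ := B.map (mulRightEmbedding b⁻¹)
    have hA₁ : (1 : G) ∈ A₁ := mem_map.2 ⟨a, ha, inv_mul_cancel a⟩
    have hB₁ : (1 : G) ∈ B₁ := mem_map.2 ⟨b, hb, mul_inv_cancel b⟩
    by_cases hbot : Subgroup.closure ((A₁ : Set G) ∪ B₁) = ⊥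
    · have h_one : ∀ x ∈ (A₁ : Set G) ∪ B₁, x = 1 := fun x hx ↦
        (Subgroup.mem_bot).1 (hbot ▸ Subgroup.subset_closure hx)
      exact ⟨1, hA₁, 1, hB₁, fun x y hx hy _ ↦ ⟨h_one x (Or.inl hx), h_one y (Or.inr hy)⟩⟩
    obtain ⟨φ, hφ⟩ := h _ hbot ⟨A₁ ∪ B₁, by rw [coe_union]⟩
    exact UniqueMul.exists_of_closure_monoidHom_ne_one hA₁ hB₁ hφ fun A' B' hlt hA' hB' ↦
      ih _ (by simpa [A₁, B₁, hn] using hlt) hA' hB' rfl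

theorem MonoidAlgebra.no_zero_divisors_of_litfa_general {Γ : Type*} [Group Γ]
    (hli : ∀ H : Subgroup Γ, H ≠ ⊥ → H.FG →
      ∃ φ : H →* Multiplicative ℤ, Function.Surjective φ) :
    ∀ a b : MonoidAlgebra ℤ Γ, a * b = 0 → a = 0 ∨ b = 0 := by
  have : UniqueProds Γ := .of_forall_fg_exists_monoidHom_ne_one fun H hH hfg ↦
    (hli H hH hfg).imp fun φ hφ hφ1 ↦ by
      obtain ⟨x, hx⟩ := hφ (Multiplicative.ofAdd 1)
      rw [hφ1, MonoidHom.one_apply] at hx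
      exact one_ne_zero (Multiplicative.ofAdd.injective hx.symm)
  exact fun a b ↦ mul_eq_zero.mp

/-- **Theorem 2.4(1)-(2), domain part.** If `Γ` is a countable LITFA group (locally indicable,
torsion-free, amenable), then the integral group ring `ℤ[Γ]` has no zero divisors. -/
theorem MonoidAlgebra.no_zero_divisors_of_litfa {Γ : Type*} [Group Γ] [Countable Γ]
    (htf : ∀ (g : Γ) (n : ℕ), 1 ≤ n → g ^ n = 1 → g = 1)
    (hli : ∀ H : Subgroup Γ, H ≠ ⊥ → H.FG →
      ∃ φ : H →* Multiplicative ℤ, Function.Surjective φ)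
    (ham : IsAmenable Γ) :
    ∀ a b : MonoidAlgebra ℤ Γ, a * b = 0 → a = 0 ∨ b = 0 :=
  MonoidAlgebra.no_zero_divisors_of_litfa_general hli
end

section
/- Let Γ be a countable LITFA group. Then the set of non-zero elements of ℤ[Γ] satisfies the right Ore condition: for every a ∈ ℤ[Γ] and every non-zero s ∈ ℤ[Γ] there exist b ∈ ℤ[Γ] and a non-zero t ∈ ℤ[Γ] such that a·t = s·b. (Part of Theorem 2.4(2): ℤ[Γ] is an Ore domain.) -/
/-!
Local indicability gives unique products, so `ℤ[Γ]` is a domain: for finite `A ∋ a₀` and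
`B ∋ b₀`, a surjection onto `ℤ` of the subgroup generated by `a₀⁻¹ A ∪ B b₀⁻¹` yields heights on
`A` and `B` that add up along equal products and are not both constant; a unique product of the
top layers of `A` and `B` is then unique in `A × B`, and the top layers are smaller.
Amenability gives, for every finite `T`, a finite `F` with `|T F| < 2 |F|`: otherwise Hall's
theorem yields an injection `Γ × Fin 2 → Γ` moving points by elements of `T`, i.e. a
paradoxical decomposition, which an invariant mean forbids. Taking `T ⊇ supp a ∪ supp s`, the
map `(t, b) ↦ a t - s b` sends the rank-`2 |F|` module of pairs supported on `F` to the
rank-`|T F|` module supported on `T F`, so it has a non-zero kernel element, and `t ≠ 0`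
because `s` is not a zero divisor.
-/

open Finset
open scoped Pointwise

theorem Finset.card_filter_eq_lt_of_ne {α β : Type*} {s : Finset α} {f : α → β} {x y : α}
    (hx : x ∈ s) (hy : y ∈ s) (hne : f x ≠ f y) (c : β) [DecidablePred (f · = c)] :
    #{z ∈ s | f z = c} < #s := by
  refine card_lt_card (filter_ssubset.2 ?_)
  by_contra! h
  exact hne ((h x hx).trans (h y hy).symm)

theorem UniqueMul.of_maximal_fibers {G M : Type*} [Mul G] [AddCommMonoid M] [LinearOrder M]
    [IsOrderedCancelAddMonoid M] {A B : Finset G} {a b : G} (f g : G → M)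
    (hfg : ∀ a₁ ∈ A, ∀ b₁ ∈ B, ∀ a₂ ∈ A, ∀ b₂ ∈ B, a₁ * b₁ = a₂ * b₂ → f a₁ + g b₁ = f a₂ + g b₂)
    (ha : a ∈ A) (hb : b ∈ B) (hfa : ∀ x ∈ A, f x ≤ f a) (hgb : ∀ y ∈ B, g y ≤ g b)
    (h : UniqueMul {x ∈ A | f x = f a} {y ∈ B | g y = g b} a b) : UniqueMul A B a b := by
  intro x y hx hy hxy
  obtain ⟨hfx, hgy⟩ :=
    (add_eq_add_iff_eq_and_eq (hfa x hx) (hgb y hy)).1 (hfg x hx y hy a ha b hb hxy)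
  exact h (mem_filter.2 ⟨hx, hfx⟩) (mem_filter.2 ⟨hy, hgy⟩) hxy

def IsLocallyIndicable (Γ : Type*) [Group Γ] : Prop :=
  ∀ H : Subgroup Γ, H ≠ ⊥ → H.FG → ∃ φ : H →* Multiplicative ℤ, Function.Surjective φ

namespace IsLocallyIndicable

variable {Γ : Type*} [Group Γ]

theorem exists_additive_ne_zero (h : IsLocallyIndicable Γ) {S : Finset Γ} {x₀ : Γ}
    (hx₀ : x₀ ∈ S) (hne : x₀ ≠ 1) :
    ∃ d : Γ → ℤ, (∀ x ∈ S, ∀ y ∈ S, d (x * y) = d x + d y) ∧ ∃ x ∈ S, d x ≠ 0 := by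
  classical
  set H := Subgroup.closure (S : Set Γ)
  have hSH : ∀ x ∈ S, x ∈ H := fun x hx => Subgroup.subset_closure hx
  have hH : H ≠ ⊥ := fun hbot => hne (by simpa [hbot] using hSH x₀ hx₀)
  obtain ⟨φ, hφ⟩ := h H hH ⟨S, rfl⟩
  let d : Γ → ℤ := fun x => if hx : x ∈ H then (φ ⟨x, hx⟩).toAdd else 0
  have hd : ∀ x (hx : x ∈ H), d x = (φ ⟨x, hx⟩).toAdd := fun x hx => dif_pos hx
  refine ⟨d, fun x hx y hy => ?_, ?_⟩
  · rw [hd x (hSH x hx), hd y (hSH y hy), hd _ (mul_mem (hSH x hx) (hSH y hy)), ← toAdd_mul,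
      ← map_mul]
    rfl
  · by_contra! hS
    have hφ1 : φ = 1 := MonoidHom.eq_of_eqOn_dense Subgroup.closure_closure_coe_preimage
      fun x hx => by simpa [hd x x.2] using hS x hx
    obtain ⟨w, hw⟩ := hφ (Multiplicative.ofAdd 1)
    simpa [hφ1] using congrArg Multiplicative.toAdd hw

theorem exists_heights (h : IsLocallyIndicable Γ) {A B : Finset Γ} {a₀ b₀ : Γ}
    (ha₀ : a₀ ∈ A) (hAB : (∃ a ∈ A, a ≠ a₀) ∨ ∃ b ∈ B, b ≠ b₀) :
    ∃ f g : Γ → ℤ,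
      (∀ a₁ ∈ A, ∀ b₁ ∈ B, ∀ a₂ ∈ A, ∀ b₂ ∈ B, a₁ * b₁ = a₂ * b₂ → f a₁ + g b₁ = f a₂ + g b₂) ∧
      ((∃ a ∈ A, f a ≠ f a₀) ∨ ∃ b ∈ B, g b ≠ g b₀) := by
  classical
  set S := A.image (a₀⁻¹ * ·) ∪ B.image (· * b₀⁻¹)
  have hAS : ∀ a ∈ A, a₀⁻¹ * a ∈ S := fun a ha => mem_union_left _ (mem_image_of_mem _ ha)
  have hBS : ∀ b ∈ B, b * b₀⁻¹ ∈ S := fun b hb => mem_union_right _ (mem_image_of_mem _ hb)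
  obtain ⟨x₀, hx₀, hne⟩ : ∃ x ∈ S, x ≠ 1 := by
    rcases hAB with ⟨a, ha, hne⟩ | ⟨b, hb, hne⟩
    · exact ⟨_, hAS a ha, fun h1 => hne (inv_mul_eq_one.1 h1).symm⟩
    · exact ⟨_, hBS b hb, fun h1 => hne (mul_inv_eq_one.1 h1)⟩
  obtain ⟨d, hd, x, hxS, hdx⟩ := h.exists_additive_ne_zero hx₀ hne
  have hd1 : d 1 = 0 := by
    have h1 := hAS a₀ ha₀
    rw [inv_mul_cancel] at h1
    have := hd 1 h1 1 h1
    rw [mul_one] at this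
    omega
  refine ⟨fun a => d (a₀⁻¹ * a), fun b => d (b * b₀⁻¹), ?_, ?_⟩
  · intro a₁ ha₁ b₁ hb₁ a₂ ha₂ b₂ hb₂ e
    simp only [← hd _ (hAS _ ha₁) _ (hBS _ hb₁), ← hd _ (hAS _ ha₂) _ (hBS _ hb₂), mul_assoc]
    rw [← mul_assoc a₁, e, mul_assoc a₂]
  · rcases mem_union.1 hxS with hxA | hxB
    · obtain ⟨a, ha, rfl⟩ := mem_image.1 hxA
      exact .inl ⟨a, ha, by simpa [hd1] using hdx⟩
    · obtain ⟨b, hb, rfl⟩ := mem_image.1 hxB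
      exact .inr ⟨b, hb, by simpa [hd1] using hdx⟩

end IsLocallyIndicable

theorem IsLocallyIndicable.uniqueProds {Γ : Type*} [Group Γ] (h : IsLocallyIndicable Γ) :
    UniqueProds Γ := by
  classical
  refine ⟨fun {A B} hA hB => ?_⟩
  induction hn : #A + #B using Nat.strong_induction_on generalizing A B with
  | _ n ih =>
  obtain ⟨a₀, ha₀⟩ := hA
  obtain ⟨b₀, hb₀⟩ := hB
  by_cases! hAB : (∃ a ∈ A, a ≠ a₀) ∨ ∃ b ∈ B, b ≠ b₀
  swap
  · exact ⟨a₀, ha₀, b₀, hb₀, fun a b ha hb _ => ⟨hAB.1 a ha, hAB.2 b hb⟩⟩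
  obtain ⟨f, g, hfg, hvar⟩ := h.exists_heights ha₀ hAB
  obtain ⟨a₁, ha₁, hfa₁⟩ := exists_max_image A f ⟨a₀, ha₀⟩
  obtain ⟨b₁, hb₁, hgb₁⟩ := exists_max_image B g ⟨b₀, hb₀⟩
  have hlt : #{x ∈ A | f x = f a₁} + #{y ∈ B | g y = g b₁} < n := by
    have hA₁ : #{x ∈ A | f x = f a₁} ≤ #A := card_filter_le _ _
    have hB₁ : #{y ∈ B | g y = g b₁} ≤ #B := card_filter_le _ _
    rcases hvar with ⟨a, ha, hne⟩ | ⟨b, hb, hne⟩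
    · have := card_filter_eq_lt_of_ne ha ha₀ hne (f a₁); omega
    · have := card_filter_eq_lt_of_ne hb hb₀ hne (g b₁); omega
  obtain ⟨a, ha, b, hb, hu⟩ := ih _ hlt (A := {x ∈ A | f x = f a₁}) (B := {y ∈ B | g y = g b₁})
    ⟨a₁, mem_filter.2 ⟨ha₁, rfl⟩⟩ ⟨b₁, mem_filter.2 ⟨hb₁, rfl⟩⟩ rfl
  rw [mem_filter] at ha hb
  refine ⟨a, ha.1, b, hb.1, UniqueMul.of_maximal_fibers f g hfg ha.1 hb.1 ?_ ?_ ?_⟩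
  · simpa only [ha.2] using hfa₁
  · simpa only [hb.2] using hgb₁
  · simpa only [ha.2, hb.2] using hu

theorem Finset.exists_injective_of_card_mul_le {Γ ι : Type*} [Mul Γ] [DecidableEq Γ]
    [Fintype ι] (T : Finset Γ) (h : ∀ F : Finset Γ, Fintype.card ι * #F ≤ #(T * F)) :
    ∃ f : Γ × ι → Γ, Function.Injective f ∧ ∀ z, ∃ g ∈ T, g * z.1 = f z := by
  obtain ⟨f, hf, hfT⟩ := (all_card_le_biUnion_card_iff_exists_injective
    fun z : Γ × ι => T.image (· * z.1)).1 fun s => calc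
      #s ≤ #(s.image Prod.fst ×ˢ (univ : Finset ι)) :=
        card_le_card fun z hz => mem_product.2 ⟨mem_image_of_mem _ hz, mem_univ _⟩
      _ = Fintype.card ι * #(s.image Prod.fst) := by rw [card_product, card_univ, mul_comm]
      _ ≤ #(T * s.image Prod.fst) := h _
      _ ≤ #(s.biUnion fun z => T.image (· * z.1)) := card_le_card fun y hy => by
        obtain ⟨g, hg, x, hx, rfl⟩ := mem_mul.1 hy
        obtain ⟨z, hz, rfl⟩ := mem_image.1 hx
        exact mem_biUnion.2 ⟨z, hz, mem_image_of_mem _ hg⟩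
  exact ⟨f, hf, fun z => mem_image.1 (hfT z)⟩

namespace BoundedFun

variable {Γ : Type*}

def one : BoundedFun Γ := ⟨fun _ => 1, 1, fun _ => by norm_num⟩

noncomputable def indicator (A : Set Γ) : BoundedFun Γ :=
  ⟨A.indicator 1, 1, fun x => by by_cases h : x ∈ A <;> simp [h]⟩

def translate [Group Γ] (g : Γ) (f : BoundedFun Γ) : BoundedFun Γ :=
  ⟨fun x => (f : Γ → ℝ) (g⁻¹ * x), by
    obtain ⟨C, hC⟩ := f.2
    exact ⟨C, fun x => hC _⟩⟩

end BoundedFun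

namespace IsInvariantMean

variable {Γ : Type*} [Group Γ] {m : BoundedFun Γ →ₗ[ℝ] ℝ}

theorem map_one (hm : IsInvariantMean Γ m) : m BoundedFun.one = 1 := hm.2.1

theorem map_translate (hm : IsInvariantMean Γ m) (g : Γ) (f : BoundedFun Γ) :
    m (BoundedFun.translate g f) = m f := hm.2.2 g f

theorem mono (hm : IsInvariantMean Γ m) {f f' : BoundedFun Γ}
    (h : ∀ x, (f : Γ → ℝ) x ≤ (f' : Γ → ℝ) x) : m f ≤ m f' := by
  have := hm.1 (f' - f) fun x => by simpa using h x
  rw [map_sub] at this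
  linarith

theorem card_le_one_of_injective (hm : IsInvariantMean Γ m) {ι : Type*} [Fintype ι]
    (T : Finset Γ) {f : Γ × ι → Γ} (hf : Function.Injective f)
    (hT : ∀ z, ∃ g ∈ T, g * z.1 = f z) : Fintype.card ι ≤ 1 := by
  classical
  -- For each `i` the sets `A i g` cover `Γ`, while all the translates `g • A i g` are disjoint.
  let A : ι → Γ → Set Γ := fun i g => {x | f (x, i) = g * x}
  have hcover : ∀ i x, 1 ≤ ∑ g ∈ T, (BoundedFun.indicator (A i g) : Γ → ℝ) x := by
    intro i x
    obtain ⟨g, hg, hgx⟩ := hT (x, i)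
    have hnonneg : ∀ g ∈ T, 0 ≤ (BoundedFun.indicator (A i g) : Γ → ℝ) x :=
      fun g _ => Set.indicator_nonneg (fun _ _ => zero_le_one) x
    refine le_trans (le_of_eq ?_) (single_le_sum hnonneg hg)
    exact (Set.indicator_of_mem (show x ∈ A i g from hgx.symm) 1).symm
  have hpack : ∀ y, ∑ p ∈ univ ×ˢ T,
      (BoundedFun.translate p.2 (BoundedFun.indicator (A p.1 p.2)) : Γ → ℝ) y ≤ 1 := by
    intro y
    simp only [BoundedFun.translate, BoundedFun.indicator, A, Set.indicator_apply,
      Set.mem_ofPred_eq, mul_inv_cancel_left, Pi.one_apply]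
    rw [sum_boole]
    norm_cast
    refine card_le_one.2 fun p hp q hq => ?_
    simp only [mem_filter] at hp hq
    have := hf (hp.2.trans hq.2.symm)
    simp only [Prod.mk.injEq, mul_right_cancel_iff, inv_inj] at this
    exact Prod.ext this.2 this.1
  have : (Fintype.card ι : ℝ) ≤ 1 := calc
    (Fintype.card ι : ℝ) = ∑ _i : ι, m BoundedFun.one := by simp [hm.map_one]
    _ ≤ ∑ i : ι, m (∑ g ∈ T, BoundedFun.indicator (A i g)) :=
      sum_le_sum fun i _ => hm.mono fun x => by simpa [BoundedFun.one] using hcover i x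
    _ = ∑ p ∈ univ ×ˢ T, m (BoundedFun.translate p.2 (BoundedFun.indicator (A p.1 p.2))) := by
      simp only [map_sum, sum_product, hm.map_translate]
    _ = m (∑ p ∈ univ ×ˢ T, BoundedFun.translate p.2 (BoundedFun.indicator (A p.1 p.2))) :=
      (map_sum ..).symm
    _ ≤ m BoundedFun.one := hm.mono fun y => by simpa [BoundedFun.one] using hpack y
    _ = 1 := hm.map_one
  exact_mod_cast this

end IsInvariantMean

theorem IsInvariantMean.exists_card_mul_lt {Γ : Type*} [Group Γ] [DecidableEq Γ]
    {m : BoundedFun Γ →ₗ[ℝ] ℝ} (hm : IsInvariantMean Γ m) (T : Finset Γ) :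
    ∃ F : Finset Γ, #(T * F) < 2 * #F := by
  by_contra! h
  obtain ⟨f, hf, hT⟩ := exists_injective_of_card_mul_le (ι := Fin 2) T (by simpa using h)
  simpa using hm.card_le_one_of_injective T hf hT

namespace MonoidAlgebra

variable {R G : Type*} [CommRing R] [Mul G] [DecidableEq G]

theorem mul_mem_supported {a x : MonoidAlgebra R G} {T F : Finset G} (ha : a.coeff.support ⊆ T)
    (hx : x ∈ supported R R (F : Set G)) : a * x ∈ supported R R ((T * F : Finset G) : Set G) := by
  rw [mem_supported, Finset.coe_subset]
  exact (support_coeff_mul_subset a x).trans (mul_subset_mul ha (Finset.coe_subset.1 hx))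

theorem exists_mul_eq_mul_of_card_mul_lt [Nontrivial R] {a s : MonoidAlgebra R G} {T F : Finset G}
    (ha : a.coeff.support ⊆ T) (hs : s.coeff.support ⊆ T) (hF : #(T * F) < 2 * #F) :
    ∃ b t : MonoidAlgebra R G, (b ≠ 0 ∨ t ≠ 0) ∧ a * t = s * b := by
  set V := supported R R (F : Set G)
  set W := supported R R ((T * F : Finset G) : Set G)
  let Φ : V × V →ₗ[R] W := LinearMap.codRestrict W
    (LinearMap.mulLeft R a ∘ₗ V.subtype ∘ₗ LinearMap.fst R V V -
      LinearMap.mulLeft R s ∘ₗ V.subtype ∘ₗ LinearMap.snd R V V)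
    fun z => W.sub_mem (mul_mem_supported ha z.1.2) (mul_mem_supported hs z.2.2)
  have hrank : ∀ E : Finset G, Module.finrank R (supported R R (E : Set G)) = #E := fun E => by
    rw [(supportedEquivFinsupp (E : Set G)).finrank_eq, Module.finrank_finsupp_self]
    simp
  have : Module.Free R V := .of_equiv (supportedEquivFinsupp _).symm
  have : Module.Finite R V := .equiv (supportedEquivFinsupp _).symm
  have : Module.Finite R W := .equiv (supportedEquivFinsupp _).symm
  obtain ⟨z, hz, hne⟩ : ∃ z, Φ z = 0 ∧ z ≠ 0 := by
    by_contra! h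
    have := LinearMap.finrank_le_finrank_of_injective ((injective_iff_map_eq_zero Φ).2 h)
    rw [Module.finrank_prod, hrank, hrank] at this
    omega
  refine ⟨z.2, z.1, ?_, sub_eq_zero.1 (congrArg Subtype.val hz)⟩
  by_contra! h0
  exact hne (Prod.ext (Subtype.ext h0.2) (Subtype.ext h0.1))

end MonoidAlgebra

theorem MonoidAlgebra.right_ore_condition_of_litfa_general {Γ : Type*} [Group Γ]
    (hli : ∀ H : Subgroup Γ, H ≠ ⊥ → H.FG →
      ∃ φ : H →* Multiplicative ℤ, Function.Surjective φ)
    (ham : IsAmenable Γ) :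
    ∀ a s : MonoidAlgebra ℤ Γ, s ≠ 0 →
      ∃ (b t : MonoidAlgebra ℤ Γ), t ≠ 0 ∧ a * t = s * b := by
  classical
  intro a s hs
  have : UniqueProds Γ := IsLocallyIndicable.uniqueProds hli
  obtain ⟨m, hm⟩ := ham
  obtain ⟨F, hF⟩ := hm.exists_card_mul_lt (a.coeff.support ∪ s.coeff.support)
  obtain ⟨b, t, hbt, h⟩ :=
    exists_mul_eq_mul_of_card_mul_lt Finset.subset_union_left Finset.subset_union_right hF
  refine ⟨b, t, fun ht => ?_, h⟩
  rw [ht, mul_zero, eq_comm, mul_eq_zero] at h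
  exact hbt.elim (fun hb => hb (h.resolve_left hs)) (· ht)

/-- **Theorem 2.4(2), Ore part.** If `Γ` is a countable LITFA group (locally indicable,
torsion-free, amenable), then the set of non-zero elements of the integral group ring `ℤ[Γ]`
satisfies the right Ore condition: for every `a` and every non-zero `s` there are `b` and a
non-zero `t` with `a * t = s * b`. -/
theorem MonoidAlgebra.right_ore_condition_of_litfa {Γ : Type*} [Group Γ] [Countable Γ]
    (htf : ∀ (g : Γ) (n : ℕ), 1 ≤ n → g ^ n = 1 → g = 1)
    (hli : ∀ H : Subgroup Γ, H ≠ ⊥ → H.FG →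
      ∃ φ : H →* Multiplicative ℤ, Function.Surjective φ)
    (ham : IsAmenable Γ) :
    ∀ a s : MonoidAlgebra ℤ Γ, s ≠ 0 →
      ∃ (b t : MonoidAlgebra ℤ Γ), t ≠ 0 ∧ a * t = s * b :=
  MonoidAlgebra.right_ore_condition_of_litfa_general hli ham
end

section
/- Let G be a group and N a normal subgroup of G. If both N and the quotient group G/N are locally indicable, then G is locally indicable. (Local indicability is closed under extensions; this is the inductive step in showing that PTFA groups are locally indicable.) -/
/-- A group is locally indicable if every nontrivial finitely generated subgroup admits a
surjective homomorphism onto `ℤ`. -/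
def LocallyIndicable (G : Type*) [Group G] : Prop :=
  ∀ H : Subgroup G, H ≠ ⊥ → H.FG → ∃ φ : H →* Multiplicative ℤ, Function.Surjective φ

/-! A finitely generated subgroup `H ≤ G` either lies in `N`, and then it is a nontrivial
finitely generated subgroup of `N`, or it has nontrivial finitely generated image in `G ⧸ N`.
Either way it maps onto a nontrivial finitely generated subgroup of a locally indicable group,
which maps onto `ℤ`. -/

theorem LocallyIndicable.exists_surjective_of_range_ne_bot {H K : Type*} [Group H] [Group K]
    [Group.FG H] (hK : LocallyIndicable K) (f : H →* K) (hf : f.range ≠ ⊥) :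
    ∃ φ : H →* Multiplicative ℤ, Function.Surjective φ := by
  obtain ⟨ψ, hψ⟩ := hK f.range hf ((Group.fg_iff_subgroup_fg _).mp inferInstance)
  exact ⟨ψ.comp f.rangeRestrict, hψ.comp f.rangeRestrict_surjective⟩

/-- **Local indicability is closed under extensions.**  If `N` is a normal subgroup of `G` such
that both `N` and `G/N` are locally indicable, then `G` is locally indicable. -/
theorem locallyIndicable_of_normal_of_quotient {G : Type*} [Group G] (N : Subgroup G)
    [N.Normal] (hN : LocallyIndicable N) (hQ : LocallyIndicable (G ⧸ N)) :
    LocallyIndicable G := by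
  intro H hH hHfg
  have : Group.FG H := (Group.fg_iff_subgroup_fg H).mpr hHfg
  have : Nontrivial H := (Subgroup.nontrivial_iff_ne_bot H).mpr hH
  by_cases hle : H ≤ N
  · refine hN.exists_surjective_of_range_ne_bot (Subgroup.inclusion hle) ?_
    rw [MonoidHom.range_eq_map, Ne,
      Subgroup.map_eq_bot_iff_of_injective _ (Subgroup.inclusion_injective hle)]
    exact top_ne_bot
  · refine hQ.exists_surjective_of_range_ne_bot ((QuotientGroup.mk' N).comp H.subtype) ?_
    rwa [MonoidHom.range_comp, Subgroup.range_subtype, Ne, Subgroup.map_eq_bot_iff,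
      QuotientGroup.ker_mk']
end
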